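/- arXiv:1702.01491 — 6 statements merged into one kernel-verified Lean document; each statement's English description precedes it below -/
import Mathlib

section
/- Let v₋ ≤ v₊ be reals, εa ≥ 0, 0 ≤ εr < 1 with max(εa, εr|v₊|) + max(εa, εr|v₋|) > 0, and let v̂ be the weighted combination v̂ = [v₋·max(εa, εr|v₊|) + v₊·max(εa, εr|v₋|)] / [max(εa, εr|v₊|) + max(εa, εr|v₋|)]. Then for every alternative estimate v̂' ∈ ℝ, sup over v' ∈ [v₋, v₊] of tol(v', v̂') ≥ sup over v' ∈ [v₋, v₊] of tol(v', v̂), where tol(v, w) = (v - w)² / max(εa², εr² v²). That is, v̂ is the minimax-optimal estimate. -/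
open Set ENNReal

set_option maxHeartbeats 1000000

noncomputable def tolE (εa εr v w : ℝ) : ℝ≥0∞ :=
  if max (εa ^ 2) (εr ^ 2 * v ^ 2) = 0 then ⊤
  else ENNReal.ofReal ((v - w) ^ 2 / max (εa ^ 2) (εr ^ 2 * v ^ 2))

/-- the weighted combination v̂ is the minimax-optimal estimate:
for every alternative v̂', sup_{v' ∈ [v₋,v₊]} tol(v', v̂') ≥ sup_{v' ∈ [v₋,v₊]} tol(v', v̂). -/
theorem stmt_3 (εa εr vm vp vhat : ℝ) (hvmp : vm ≤ vp)
    (hεa : 0 ≤ εa) (hεr0 : 0 ≤ εr) (hεr1 : εr < 1)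
    (hden : 0 < max εa (εr * |vp|) + max εa (εr * |vm|))
    (hv : vhat = (vm * max εa (εr * |vp|) + vp * max εa (εr * |vm|)) /
        (max εa (εr * |vp|) + max εa (εr * |vm|))) :
    ∀ vhat' : ℝ,
      (⨆ v' ∈ Icc vm vp, tolE εa εr v' vhat) ≤ ⨆ v' ∈ Icc vm vp, tolE εa εr v' vhat' := by
  intro w
  by_cases h0 : ∃ v ∈ Icc vm vp, max (εa ^ 2) (εr ^ 2 * v ^ 2) = 0
  · obtain ⟨v, hvI, hveq⟩ := h0
    have htop : tolE εa εr v w = ⊤ := by rw [tolE, if_pos hveq]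
    have h2 : (⊤ : ℝ≥0∞) ≤ ⨆ v' ∈ Icc vm vp, tolE εa εr v' w := by
      rw [← htop]
      exact le_iSup₂ (f := fun v' _ => tolE εa εr v' w) v hvI
    exact le_trans le_top h2
  · push_neg at h0
    set a := max εa (εr * |vp|) with ha
    set b := max εa (εr * |vm|) with hb
    have hcne : a + b ≠ 0 := ne_of_gt hden
    have hmax : ∀ v : ℝ, max (εa ^ 2) (εr ^ 2 * v ^ 2) = (max εa (εr * |v|)) ^ 2 := by
      intro v
      have h2 : εr ^ 2 * v ^ 2 = (εr * |v|) ^ 2 := by rw [mul_pow, sq_abs]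
      have hnn : 0 ≤ εr * |v| := mul_nonneg hεr0 (abs_nonneg v)
      rw [h2]
      rcases le_total εa (εr * |v|) with h | h
      · rw [max_eq_right h, max_eq_right (pow_le_pow_left₀ hεa h 2)]
      · rw [max_eq_left h, max_eq_left (pow_le_pow_left₀ hnn h 2)]
    have hpos : ∀ v ∈ Icc vm vp, 0 < max εa (εr * |v|) := by
      intro v hvI
      have hne := h0 v hvI
      rw [hmax v] at hne
      have h1 : max εa (εr * |v|) ≠ 0 := fun h => hne (by rw [h]; ring)
      exact lt_of_le_of_ne (le_trans hεa (le_max_left _ _)) (Ne.symm h1)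
    have hb0 : 0 < b := hpos vm ⟨le_refl _, hvmp⟩
    have ha0 : 0 < a := hpos vp ⟨hvmp, le_refl _⟩
    set s := (vp - vm) / (a + b) with hs
    have hs0 : 0 ≤ s := div_nonneg (sub_nonneg.2 hvmp) hden.le
    have hca : εr * (vp - vm) ≤ a + b := by
      have h1 : εr * vp ≤ a := le_trans (mul_le_mul_of_nonneg_left (le_abs_self vp) hεr0) (le_max_right _ _)
      have h2 : εr * (-vm) ≤ b := le_trans (mul_le_mul_of_nonneg_left (neg_le_abs vm) hεr0) (le_max_right _ _)
      nlinarith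
    have hsr : s * εr ≤ 1 := by
      have : s * εr = εr * (vp - vm) / (a + b) := by rw [hs]; ring
      rw [this]
      exact (div_le_one hden).2 hca
    have key1 : vhat - vm = s * b := by
      rw [hv, hs]; field_simp; ring
    have key2 : vp - vhat = s * a := by
      rw [hv, hs]; field_simp; ring
    have lemA : ∀ v, vm ≤ v → v ≤ vp → |v - vhat| ≤ s * max εa (εr * |v|) := by
      intro v h1 h2
      set m := max εa (εr * |v|) with hm
      have hm0 : 0 ≤ m := le_trans hεa (le_max_left _ _)
      rcases le_total v vhat with hc | hc
      · rw [abs_of_nonpos (by linarith)]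
        have hbm : b - m ≤ εr * (v - vm) := by
          rcases max_cases εa (εr * |vm|) with ⟨he, _⟩ | ⟨he, _⟩
          · have h3 : εa ≤ m := le_max_left _ _
            have h4 : 0 ≤ εr * (v - vm) := mul_nonneg hεr0 (by linarith)
            rw [← hb] at *
            linarith
          · have h3 : εr * |v| ≤ m := le_max_right _ _
            have h4 : |vm| - |v| ≤ |vm - v| := abs_sub_abs_le_abs_sub _ _
            have h5 : |vm - v| = v - vm := by rw [abs_sub_comm, abs_of_nonneg (by linarith)]
            rw [← hb] at *
            nlinarith
        have h6 : s * (b - m) ≤ s * (εr * (v - vm)) := mul_le_mul_of_nonneg_left hbm hs0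
        have h7 : s * εr * (v - vm) ≤ 1 * (v - vm) := mul_le_mul_of_nonneg_right hsr (by linarith)
        nlinarith
      · rw [abs_of_nonneg (by linarith)]
        have ham : a - m ≤ εr * (vp - v) := by
          rcases max_cases εa (εr * |vp|) with ⟨he, _⟩ | ⟨he, _⟩
          · have h3 : εa ≤ m := le_max_left _ _
            have h4 : 0 ≤ εr * (vp - v) := mul_nonneg hεr0 (by linarith)
            rw [← ha] at *
            linarith
          · have h3 : εr * |v| ≤ m := le_max_right _ _
            have h4 : |vp| - |v| ≤ |vp - v| := abs_sub_abs_le_abs_sub _ _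
            have h5 : |vp - v| = vp - v := abs_of_nonneg (by linarith)
            rw [← ha] at *
            nlinarith
        have h6 : s * (a - m) ≤ s * (εr * (vp - v)) := mul_le_mul_of_nonneg_left ham hs0
        have h7 : s * εr * (vp - v) ≤ 1 * (vp - v) := mul_le_mul_of_nonneg_right hsr (by linarith)
        nlinarith
    have hub : (⨆ v' ∈ Icc vm vp, tolE εa εr v' vhat) ≤ ENNReal.ofReal (s ^ 2) := by
      refine iSup₂_le fun v hvI => ?_
      rw [tolE, if_neg (h0 v hvI), hmax v]
      apply ENNReal.ofReal_le_ofReal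
      have hmv := hpos v hvI
      rw [div_le_iff₀ (by positivity)]
      have hA := lemA v hvI.1 hvI.2
      have h2 := mul_self_le_mul_self (abs_nonneg (v - vhat)) hA
      nlinarith [sq_abs (v - vhat)]
    have hab' : s * a + s * b = vp - vm := by
      rw [hs]; field_simp
    have hkey : s ^ 2 ≤ (vm - w) ^ 2 / b ^ 2 ∨ s ^ 2 ≤ (vp - w) ^ 2 / a ^ 2 := by
      by_contra hcon
      push_neg at hcon
      obtain ⟨h1, h2⟩ := hcon
      rw [div_lt_iff₀ (by positivity)] at h1 h2
      have e1 : |vm - w| < s * b := by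
        by_contra h
        push_neg at h
        have := mul_self_le_mul_self (mul_nonneg hs0 hb0.le) h
        nlinarith [sq_abs (vm - w)]
      have e2 : |vp - w| < s * a := by
        by_contra h
        push_neg at h
        have := mul_self_le_mul_self (mul_nonneg hs0 ha0.le) h
        nlinarith [sq_abs (vp - w)]
      linarith [le_abs_self (vp - w), neg_abs_le (vm - w)]
    rcases hkey with h | h
    · refine le_trans hub (le_trans ?_ (le_iSup₂ (f := fun v' _ => tolE εa εr v' w) vm ⟨le_refl _, hvmp⟩))
      rw [tolE, if_neg (h0 vm ⟨le_refl _, hvmp⟩), hmax vm, ← hb]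
      exact ENNReal.ofReal_le_ofReal h
    · refine le_trans hub (le_trans ?_ (le_iSup₂ (f := fun v' _ => tolE εa εr v' w) vp ⟨hvmp, le_refl _⟩))
      rw [tolE, if_neg (h0 vp ⟨hvmp, le_refl _⟩), hmax vp, ← ha]
      exact ENNReal.ofReal_le_ofReal h
end

section
/- Let v₋ ≤ v₊, εa ≥ 0, 0 ≤ εr < 1, and let v̂ be the optimal estimate v̂ = [v₋·max(εa, εr|v₊|) + v₊·max(εa, εr|v₋|)] / [max(εa, εr|v₊|) + max(εa, εr|v₋|)]. Then the supremum over v' ∈ [v₋, v₊] of tol(v', v̂) = (v' - v̂)² / max(εa², εr² v'²) is attained simultaneously at the two endpoints v' = v₋ and v' = v₊. -/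
open Set

lemma max_sq' {a b : ℝ} (ha : 0 ≤ a) (hb : 0 ≤ b) :
    (max a b) ^ 2 = max (a ^ 2) (b ^ 2) := by
  rcases le_total a b with h | h
  · rw [max_eq_right h, max_eq_right (by nlinarith)]
  · rw [max_eq_left h, max_eq_left (by nlinarith)]

lemma lip' (εa εr u w : ℝ) (hεr0 : 0 ≤ εr) :
    |max εa (εr * |u|) - max εa (εr * |w|)| ≤ εr * |u - w| := by
  calc |max εa (εr * |u|) - max εa (εr * |w|)|
      = abs (max (εr * |u|) εa - max (εr * |w|) εa) := by rw [max_comm εa, max_comm εa]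
    _ ≤ abs (εr * |u| - εr * |w|) := abs_max_sub_max_le_abs _ _ _
    _ = εr * abs (|u| - |w|) := by rw [← mul_sub, abs_mul, abs_of_nonneg hεr0]
    _ ≤ εr * |u - w| :=
        mul_le_mul_of_nonneg_left (abs_abs_sub_abs_le_abs_sub u w) hεr0

/-- for the optimal estimate v̂, the supremum over v' ∈ [v₋, v₊] of
tol(v', v̂) = (v' - v̂)²/max(εa², εr² v'²) is attained simultaneously at both
endpoints v' = v₋ and v' = v₊. -/
theorem stmt_4 (εa εr vm vp vhat : ℝ) (hvmp : vm ≤ vp)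
    (hεa : 0 ≤ εa) (hεr0 : 0 ≤ εr) (hεr1 : εr < 1)
    (hden : 0 < max εa (εr * |vp|) + max εa (εr * |vm|))
    (hdp : 0 < max (εa ^ 2) (εr ^ 2 * vp ^ 2))
    (hdm : 0 < max (εa ^ 2) (εr ^ 2 * vm ^ 2))
    (hv : vhat = (vm * max εa (εr * |vp|) + vp * max εa (εr * |vm|)) /
        (max εa (εr * |vp|) + max εa (εr * |vm|))) :
    (vm - vhat) ^ 2 / max (εa ^ 2) (εr ^ 2 * vm ^ 2)
      = (vp - vhat) ^ 2 / max (εa ^ 2) (εr ^ 2 * vp ^ 2) ∧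
    ∀ v' ∈ Icc vm vp,
      (v' - vhat) ^ 2 / max (εa ^ 2) (εr ^ 2 * v' ^ 2)
        ≤ (vp - vhat) ^ 2 / max (εa ^ 2) (εr ^ 2 * vp ^ 2) := by
  set A := max εa (εr * |vp|) with hA
  set B := max εa (εr * |vm|) with hB
  set S := A + B with hS
  have hS0 : 0 < S := hden
  set K := (vp - vm) / S with hK
  have hA0 : 0 ≤ A := le_trans hεa (le_max_left _ _)
  have hB0 : 0 ≤ B := le_trans hεa (le_max_left _ _)
  have hA2 : max (εa ^ 2) (εr ^ 2 * vp ^ 2) = A ^ 2 := by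
    rw [hA, max_sq' hεa (by positivity), mul_pow, sq_abs]
  have hB2 : max (εa ^ 2) (εr ^ 2 * vm ^ 2) = B ^ 2 := by
    rw [hB, max_sq' hεa (by positivity), mul_pow, sq_abs]
  have hApos : 0 < A := by nlinarith [hA2 ▸ hdp]
  have hBpos : 0 < B := by nlinarith [hB2 ▸ hdm]
  have hK0 : 0 ≤ K := div_nonneg (by linarith) hS0.le
  have hKεr : K * εr ≤ 1 := by
    rw [hK, div_mul_eq_mul_div, div_le_one hS0]
    have h1 : εr * vp ≤ εr * |vp| := mul_le_mul_of_nonneg_left (le_abs_self _) hεr0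
    have h2 : εr * (-vm) ≤ εr * |vm| := mul_le_mul_of_nonneg_left (neg_le_abs _) hεr0
    have h3 : εr * |vp| ≤ A := le_max_right _ _
    have h4 : εr * |vm| ≤ B := le_max_right _ _
    nlinarith
  have hvp : vp - vhat = K * A := by
    rw [hv, hK, hS]; field_simp; ring
  have hvm : vm - vhat = -(K * B) := by
    rw [hv, hK, hS]; field_simp; ring
  have key : ∀ v' ∈ Icc vm vp, |v' - vhat| ≤ K * max εa (εr * |v'|) := by
    intro v' hmem
    obtain ⟨h1, h2⟩ := hmem
    set C := max εa (εr * |v'|) with hC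
    rw [abs_le]
    have hBC : B - C ≤ εr * (v' - vm) := by
      have h := lip' εa εr vm v' hεr0
      rw [abs_sub_comm vm v', abs_of_nonneg (by linarith : (0:ℝ) ≤ v' - vm)] at h
      exact le_trans (le_abs_self _) h
    have hAC : A - C ≤ εr * (vp - v') := by
      have h := lip' εa εr vp v' hεr0
      rw [abs_of_nonneg (by linarith : (0:ℝ) ≤ vp - v')] at h
      exact le_trans (le_abs_self _) h
    constructor
    · -- -(K*C) ≤ v' - vhat
      have hm1 : K * (B - C) ≤ K * (εr * (v' - vm)) := mul_le_mul_of_nonneg_left hBC hK0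
      have hm2 : K * εr * (v' - vm) ≤ 1 * (v' - vm) :=
        mul_le_mul_of_nonneg_right hKεr (by linarith)
      rw [mul_sub, ← mul_assoc] at hm1
      linarith [hvm]
    · have hm1 : K * (A - C) ≤ K * (εr * (vp - v')) := mul_le_mul_of_nonneg_left hAC hK0
      have hm2 : K * εr * (vp - v') ≤ 1 * (vp - v') :=
        mul_le_mul_of_nonneg_right hKεr (by linarith)
      rw [mul_sub, ← mul_assoc] at hm1
      linarith [hvp]
  constructor
  · rw [hA2, hB2, hvp, hvm]
    rw [neg_pow, mul_pow, mul_pow]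
    field_simp
  · intro v' hmem
    have h := key v' hmem
    set C := max εa (εr * |v'|) with hC
    have hC0 : 0 ≤ C := le_trans hεa (le_max_left _ _)
    have hC2 : max (εa ^ 2) (εr ^ 2 * v' ^ 2) = C ^ 2 := by
      rw [hC, max_sq' hεa (by positivity), mul_pow, sq_abs]
    have hsq : (v' - vhat) ^ 2 ≤ (K * C) ^ 2 := by
      have h2 := pow_le_pow_left₀ (abs_nonneg (v' - vhat)) h 2
      rwa [sq_abs] at h2
    rw [hA2, hC2, hvp, mul_pow, mul_div_assoc, div_self (by positivity), mul_one]
    rcases eq_or_lt_of_le hC0 with hc | hc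
    · rw [← hc]
      norm_num
      positivity
    · rw [div_le_iff₀ (by positivity)]
      exact hsq.trans_eq (by ring)
end

section
/- The optimal estimate v̂ = [v₋·max(εa, εr|v₊|) + v₊·max(εa, εr|v₋|)] / [max(εa, εr|v₊|) + max(εa, εr|v₋|)] is a shrinkage estimator: v̂ is either zero or has the same sign as (v₋ + v₊)/2, and |v̂| ≤ |(v₋ + v₊)/2|. -/
lemma stmt_5_key (εa εr s t : ℝ) (hεa : 0 ≤ εa) (hεr : 0 ≤ εr) (hs : 0 ≤ s) (hst : s ≤ t) :
    s * max εa (εr * t) ≤ t * max εa (εr * s) := by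
  have ht : 0 ≤ t := hs.trans hst
  rw [mul_max_of_nonneg _ _ hs, mul_max_of_nonneg _ _ ht]
  exact max_le_max (by nlinarith) (by nlinarith)

/-- the optimal estimate v̂ is a shrinkage estimator: it is either
zero or has the same sign as (v₋ + v₊)/2, and |v̂| ≤ |(v₋ + v₊)/2|. -/
theorem stmt_5 (εa εr vm vp vhat : ℝ) (hvmp : vm ≤ vp)
    (hεa : 0 ≤ εa) (hεr0 : 0 ≤ εr) (hεr1 : εr < 1)
    (hden : 0 < max εa (εr * |vp|) + max εa (εr * |vm|))
    (hv : vhat = (vm * max εa (εr * |vp|) + vp * max εa (εr * |vm|)) /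
        (max εa (εr * |vp|) + max εa (εr * |vm|))) :
    (vhat = 0 ∨ 0 < vhat * ((vm + vp) / 2)) ∧ |vhat| ≤ |(vm + vp) / 2| := by
  set a := max εa (εr * |vp|) with ha
  set b := max εa (εr * |vm|) with hb
  have ha0 : 0 ≤ a := hεa.trans (le_max_left _ _)
  have hb0 : 0 ≤ b := hεa.trans (le_max_left _ _)
  -- upper/lower bounds on vhat
  have hge : 0 ≤ vm + vp → 0 ≤ vhat ∧ vhat ≤ (vm + vp) / 2 := by
    intro h
    have hvp0 : 0 ≤ vp := by linarith
    have habs_p : |vp| = vp := abs_of_nonneg hvp0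
    have habs_m : |vm| ≤ vp := by
      rcases le_or_gt 0 vm with h1 | h1
      · rw [abs_of_nonneg h1]; exact hvmp
      · rw [abs_of_neg h1]; linarith
    have hab : b ≤ a := by
      apply max_le_max le_rfl
      apply mul_le_mul_of_nonneg_left _ hεr0
      rw [habs_p]; exact habs_m
    have hN : 0 ≤ vm * a + vp * b := by
      rcases le_or_gt 0 vm with h1 | h1
      · have := mul_nonneg h1 ha0
        have := mul_nonneg hvp0 hb0
        linarith
      · have hk := stmt_5_key εa εr (-vm) vp hεa hεr0 (by linarith) (by linarith)
        have hk' : (-vm) * a ≤ vp * b := by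
          rw [ha, hb, abs_of_neg h1, abs_of_nonneg hvp0]; exact hk
        linarith
    constructor
    · rw [hv]; exact div_nonneg hN hden.le
    · rw [hv, div_le_iff₀ hden]
      nlinarith [mul_nonneg (sub_nonneg.mpr hvmp) (sub_nonneg.mpr hab)]
  have hle : vm + vp ≤ 0 → (vm + vp) / 2 ≤ vhat ∧ vhat ≤ 0 := by
    intro h
    have hvm0 : vm ≤ 0 := by linarith
    have habs_m : |vm| = -vm := abs_of_nonpos hvm0
    have habs_p : |vp| ≤ -vm := by
      rcases le_or_gt 0 vp with h1 | h1
      · rw [abs_of_nonneg h1]; linarith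
      · rw [abs_of_neg h1]; linarith
    have hab : a ≤ b := by
      apply max_le_max le_rfl
      apply mul_le_mul_of_nonneg_left _ hεr0
      rw [habs_m]; exact habs_p
    have hN : vm * a + vp * b ≤ 0 := by
      rcases le_or_gt 0 vp with h1 | h1
      · have hk := stmt_5_key εa εr vp (-vm) hεa hεr0 h1 (by linarith)
        have hk' : vp * b ≤ (-vm) * a := by
          rw [ha, hb, abs_of_nonneg h1, abs_of_nonpos hvm0]; exact hk
        linarith
      · nlinarith [mul_nonneg (neg_nonneg.mpr hvm0) ha0,
          mul_nonneg (neg_nonneg.mpr h1.le) hb0]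
    constructor
    · rw [hv, le_div_iff₀ hden]
      nlinarith [mul_nonneg (sub_nonneg.mpr hvmp) (sub_nonneg.mpr hab)]
    · rw [hv]
      exact div_nonpos_of_nonpos_of_nonneg hN hden.le
  constructor
  · by_cases hz : vhat = 0
    · exact Or.inl hz
    · right
      rcases lt_trichotomy (vm + vp) 0 with h | h | h
      · obtain ⟨h1, h2⟩ := hle h.le
        have : vhat < 0 := lt_of_le_of_ne h2 hz
        exact mul_pos_of_neg_of_neg this (by linarith)
      · obtain ⟨h1, h2⟩ := hge (le_of_eq h.symm)
        obtain ⟨h3, h4⟩ := hle (le_of_eq h)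
        exact absurd (le_antisymm h4 h1) hz
      · obtain ⟨h1, h2⟩ := hge h.le
        have : 0 < vhat := lt_of_le_of_ne h1 (Ne.symm hz)
        exact mul_pos this (by linarith)
  · rcases le_total 0 (vm + vp) with h | h
    · obtain ⟨h1, h2⟩ := hge h
      rw [abs_of_nonneg h1, abs_of_nonneg (by linarith : (0:ℝ) ≤ (vm + vp) / 2)]
      exact h2
    · obtain ⟨h1, h2⟩ := hle h
      rw [abs_of_nonpos h2, abs_of_nonpos (by linarith : (vm + vp) / 2 ≤ 0)]
      linarith
end

section
/- If |μ - μ̂| ≤ e and e ≤ max(εa, εr|μ|)/(1 + εr), then 4e² / [max(εa, εr|μ̂ + e|) + max(εa, εr|μ̂ - e|)]² ≤ 1. -/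
/-- if |μ - μ̂| ≤ e and e ≤ max(εa, εr|μ|)/(1+εr) then the hybrid
error criterion 4e²/(max(εa, εr|μ̂+e|) + max(εa, εr|μ̂-e|))² ≤ 1 is met. -/
theorem stmt_8 (μ μhat e εa εr : ℝ) (he : 0 ≤ e) (hεa : 0 ≤ εa)
    (hεr0 : 0 ≤ εr) (hεr1 : εr < 1) (hne : εa ≠ 0 ∨ εr ≠ 0)
    (herr : |μ - μhat| ≤ e)
    (hcond : e ≤ max εa (εr * |μ|) / (1 + εr)) :
    4 * e ^ 2 / (max εa (εr * |μhat + e|) + max εa (εr * |μhat - e|)) ^ 2 ≤ 1 := by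
  set M := max εa (εr * |μhat + e|) + max εa (εr * |μhat - e|) with hMdef
  have h1εr : (0:ℝ) < 1 + εr := by linarith
  have hcond' : e * (1 + εr) ≤ max εa (εr * |μ|) := (le_div_iff₀ h1εr).mp hcond
  have habs : |μ| ≤ |μhat| + e := by
    have := abs_sub_abs_le_abs_sub μ μhat
    linarith
  have hkey : 2 * e ≤ M := by
    rcases le_or_gt (εr * |μ|) εa with hc | hc
    · have h1 : e * (1 + εr) ≤ εa := by
        rw [max_eq_left hc] at hcond'; exact hcond'
      have he2 : e ≤ εa := by nlinarith
      calc 2 * e ≤ εa + εa := by linarith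
        _ ≤ M := add_le_add (le_max_left _ _) (le_max_left _ _)
    · have h1 : e * (1 + εr) ≤ εr * |μ| := by
        rw [max_eq_right hc.le] at hcond'; exact hcond'
      have h2 : e ≤ εr * |μhat| := by nlinarith
      have h3 : 2 * |μhat| ≤ |μhat + e| + |μhat - e| := by
        have := abs_add_le (μhat + e) (μhat - e)
        have : |μhat + μhat| ≤ |μhat + e| + |μhat - e| := by
          have h := abs_add_le (μhat + e) (μhat - e)
          simpa [add_add_sub_cancel] using h
        calc 2 * |μhat| = |μhat + μhat| := by rw [← two_mul, abs_mul, abs_two]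
          _ ≤ _ := this
      calc 2 * e ≤ εr * (2 * |μhat|) := by linarith
        _ ≤ εr * (|μhat + e| + |μhat - e|) := by nlinarith
        _ = εr * |μhat + e| + εr * |μhat - e| := by ring
        _ ≤ M := add_le_add (le_max_right _ _) (le_max_right _ _)
  rcases eq_or_lt_of_le (show (0:ℝ) ≤ M by linarith) with hM | hM
  · have he0 : e = 0 := by linarith
    simp [he0]
  · rw [div_le_one (by positivity)]
    nlinarith
end

section
/- Let (a_κ), (b_κ) be nonnegative with |b_κ - a_κ| ≤ Σ_{λ=1}^∞ a_{κ+λ2^m} for all κ. Suppose for 0 ≤ ℓ ≤ m the cone conditions yield Ŝ_{ℓ,m} ≤ ω̂(m-ℓ)·ω̊(m-ℓ)·S_ℓ, where S_ℓ = Σ_{κ=⌊2^{ℓ-1}⌋}^{2^ℓ-1} a_κ and Ŝ_{ℓ,m} = Σ_{κ=⌊2^{ℓ-1}⌋}^{2^ℓ-1} Σ_{λ≥1} a_{κ+λ2^m}. Then the discrete block sum S̃_{ℓ,m} = Σ_{κ=⌊2^{ℓ-1}⌋}^{2^ℓ-1} b_κ satisfies S̃_{ℓ,m} / (1 + ω̂(m-ℓ)·ω̊(m-ℓ))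 ≤ S_ℓ ≤ S̃_{ℓ,m'} / (1 - ω̂(m'-ℓ)·ω̊(m'-ℓ)) for any m' ≥ ℓ with ω̂(m'-ℓ)·ω̊(m'-ℓ) < 1 (assuming the analogous hypotheses hold with m replaced by m'). -/
/-- Lower endpoint ⌊2^{ℓ-1}⌋ of the ℓ-th dyadic block (with ⌊2^{-1}⌋ = 0). -/
def blockLo (ℓ : ℕ) : ℕ := if ℓ = 0 then 0 else 2 ^ (ℓ - 1)

/-- two-sided data-based bounds on the true block sum S_ℓ in terms of
discrete block sums at sample sizes 2^m and 2^{m'}: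
S̃_{ℓ,m}/(1 + ω̂(m-ℓ)ω̊(m-ℓ)) ≤ S_ℓ ≤ S̃_{ℓ,m'}/(1 - ω̂(m'-ℓ)ω̊(m'-ℓ)). -/
theorem stmt_14 (a b b' : ℕ → ℝ) (ωhat ωring : ℕ → ℝ) (ℓ m m' : ℕ)
    (hlm : ℓ ≤ m) (hlm' : ℓ ≤ m')
    (ha : ∀ κ, 0 ≤ a κ) (hb : ∀ κ, 0 ≤ b κ) (hb' : ∀ κ, 0 ≤ b' κ) (hs : Summable a)
    (hωhat : ∀ k, 0 ≤ ωhat k) (hωring : ∀ k, 0 ≤ ωring k)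
    (htri : ∀ κ, |b κ - a κ| ≤ ∑' lam : ℕ, a (κ + (lam + 1) * 2 ^ m))
    (htri' : ∀ κ, |b' κ - a κ| ≤ ∑' lam : ℕ, a (κ + (lam + 1) * 2 ^ m'))
    (hcone : ∑ κ ∈ Finset.Ico (blockLo ℓ) (2 ^ ℓ),
          (∑' lam : ℕ, a (κ + (lam + 1) * 2 ^ m))
        ≤ ωhat (m - ℓ) * ωring (m - ℓ) * ∑ κ ∈ Finset.Ico (blockLo ℓ) (2 ^ ℓ), a κ)
    (hcone' : ∑ κ ∈ Finset.Ico (blockLo ℓ) (2 ^ ℓ),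
          (∑' lam : ℕ, a (κ + (lam + 1) * 2 ^ m'))
        ≤ ωhat (m' - ℓ) * ωring (m' - ℓ) * ∑ κ ∈ Finset.Ico (blockLo ℓ) (2 ^ ℓ), a κ)
    (hlt : ωhat (m' - ℓ) * ωring (m' - ℓ) < 1) :
    (∑ κ ∈ Finset.Ico (blockLo ℓ) (2 ^ ℓ), b κ) / (1 + ωhat (m - ℓ) * ωring (m - ℓ))
        ≤ ∑ κ ∈ Finset.Ico (blockLo ℓ) (2 ^ ℓ), a κ ∧
    (∑ κ ∈ Finset.Ico (blockLo ℓ) (2 ^ ℓ), a κ)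
        ≤ (∑ κ ∈ Finset.Ico (blockLo ℓ) (2 ^ ℓ), b' κ)
            / (1 - ωhat (m' - ℓ) * ωring (m' - ℓ)) := by

  set I := Finset.Ico (blockLo ℓ) (2 ^ ℓ)
  set ω := ωhat (m - ℓ) * ωring (m - ℓ) with hωdef
  set ω' := ωhat (m' - ℓ) * ωring (m' - ℓ) with hω'def
  have hω0 : 0 ≤ ω := mul_nonneg (hωhat _) (hωring _)
  have hω'0 : 0 ≤ ω' := mul_nonneg (hωhat _) (hωring _)
  have hS : 0 ≤ ∑ κ ∈ I, a κ := Finset.sum_nonneg fun κ _ => ha κ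
  constructor
  · rw [div_le_iff₀ (by linarith)]
    have h1 : ∑ κ ∈ I, b κ ≤ ∑ κ ∈ I, a κ + ∑ κ ∈ I, (∑' lam : ℕ, a (κ + (lam + 1) * 2 ^ m)) := by
      rw [← Finset.sum_add_distrib]
      refine Finset.sum_le_sum fun κ _ => ?_
      have := htri κ
      have := abs_le.mp this
      linarith [this.2]
    calc ∑ κ ∈ I, b κ ≤ ∑ κ ∈ I, a κ + ω * ∑ κ ∈ I, a κ := by linarith [hcone]
      _ = (∑ κ ∈ I, a κ) * (1 + ω) := by ring
  · rw [le_div_iff₀ (by linarith)]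
    have h1 : ∑ κ ∈ I, a κ ≤ ∑ κ ∈ I, b' κ + ∑ κ ∈ I, (∑' lam : ℕ, a (κ + (lam + 1) * 2 ^ m')) := by
      rw [← Finset.sum_add_distrib]
      refine Finset.sum_le_sum fun κ _ => ?_
      have := abs_le.mp (htri' κ)
      linarith [this.1]
    have : ∑ κ ∈ I, a κ ≤ ∑ κ ∈ I, b' κ + ω' * ∑ κ ∈ I, a κ := by linarith [hcone']
    nlinarith
end

section
/- Under the aliasing identity f̃_{m,κ} = f̂_κ + Σ_{λ=1}^∞ f̂_{κ+λ2^m} e_{λ} with |e_λ| = 1, and the cone conditions Σ_{λ≥1}|f̂_{λ2^m}| ≤ ω̂(m)·ω̊(r)·S_{m-r} and S̃_{m-r,m} ≥ (1 - ω̂(r)ω̊(r))·S_{m-r} with ω̂(r)ω̊(r) < 1, the cubature error satisfies |μ - μ̂_n| ≤ [ω̂(m)·ω̊(r) / (1 - ω̂(r)·ω̊(r))] · S̃_{m-r,m}, where |μ - μ̂_n| ≤ Σ_{λ≥1}|f̂_{λ2^m}| and S̃_{m-r,m} = Σ_{κ=⌊2^{m-r-1}⌋}^{2^{m-r}-1}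 |f̃_{m,κ}|. -/
/-- the data-based cubature error bound: under the cone conditions,
|μ - μ̂_n| ≤ [ω̂(m)ω̊(r)/(1 - ω̂(r)ω̊(r))] · S̃_{m-r,m}, where a κ = |f̂_κ| and
b κ = |f̃_{m,κ}|. -/
theorem stmt_15 (a b : ℕ → ℝ) (μ μn : ℝ) (ωhat ωring : ℕ → ℝ) (m r lstar : ℕ)
    (hm : lstar + r ≤ m)
    (ha : ∀ κ, 0 ≤ a κ) (hb : ∀ κ, 0 ≤ b κ) (hs : Summable a)
    (hωhat : ∀ k, 0 ≤ ωhat k) (hωring : ∀ k, 0 ≤ ωring k)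
    (herr : |μ - μn| ≤ ∑' lam : ℕ, a ((lam + 1) * 2 ^ m))
    (hcone1 : (∑' lam : ℕ, a ((lam + 1) * 2 ^ m))
        ≤ ωhat m * ωring r * ∑ κ ∈ Finset.Ico (blockLo (m - r)) (2 ^ (m - r)), a κ)
    (hcone2 : (1 - ωhat r * ωring r)
          * ∑ κ ∈ Finset.Ico (blockLo (m - r)) (2 ^ (m - r)), a κ
        ≤ ∑ κ ∈ Finset.Ico (blockLo (m - r)) (2 ^ (m - r)), b κ)
    (hlt : ωhat r * ωring r < 1) :
    |μ - μn| ≤ ωhat m * ωring r / (1 - ωhat r * ωring r)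
        * ∑ κ ∈ Finset.Ico (blockLo (m - r)) (2 ^ (m - r)), b κ := by
  set S := ∑ κ ∈ Finset.Ico (blockLo (m - r)) (2 ^ (m - r)), a κ with hS
  set T := ∑ κ ∈ Finset.Ico (blockLo (m - r)) (2 ^ (m - r)), b κ with hT
  have hpos : 0 < 1 - ωhat r * ωring r := by linarith
  have hST : S ≤ T / (1 - ωhat r * ωring r) := (le_div_iff₀' hpos).mpr hcone2
  have h1 : |μ - μn| ≤ ωhat m * ωring r * S := herr.trans hcone1
  have h2 : ωhat m * ωring r * S ≤ ωhat m * ωring r * (T / (1 - ωhat r * ωring r)) :=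
    mul_le_mul_of_nonneg_left hST (mul_nonneg (hωhat m) (hωring r))
  calc |μ - μn| ≤ ωhat m * ωring r * (T / (1 - ωhat r * ωring r)) := h1.trans h2
    _ = ωhat m * ωring r / (1 - ωhat r * ωring r) * T := by ring
end
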